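/- For any y = (y₁,…,y_K) and any point ξ in the convex hull constraint set, replacing a center y_k by the weighted centroid of the points assigned to it (with r = 2) does not increase F: F(y₁,…,c_k,…,y_K) ≤ F(y₁,…,y_k,…,y_K), where c_k = (∑_{i ∈ S_k} p_i ξ_i)/(∑_{i ∈ S_k} p_i) and S_k = {i : k = argmin_j ‖ξ_i − y_j‖} is nonempty. -/

import Mathlib

/-!
The nearest-center cost `F` is bounded by the cost of any assignment of points to centers, with
equality for the nearest-center assignment. Moving `y k` to the weighted centroid of its cell only
changes the terms of that cell, and by the parallel axis identity
`∑ wᵢ ‖xᵢ - z‖² = ∑ wᵢ ‖xᵢ - c‖² + (∑ wᵢ) ‖c - z‖²` the centroid `c` minimises their sum.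
-/

open Finset

section Centroid

variable {ι E : Type*} [NormedAddCommGroup E] [InnerProductSpace ℝ E]
  {s : Finset ι} {w : ι → ℝ} (x : ι → E)

theorem Finset.sum_smul_sub_centerMass (hw : ∑ i ∈ s, w i ≠ 0) :
    ∑ i ∈ s, w i • (x i - s.centerMass w x) = 0 := by
  have hsum : (∑ i ∈ s, w i) • s.centerMass w x = ∑ i ∈ s, w i • x i := by
    rw [Finset.centerMass, smul_smul, mul_inv_cancel₀ hw, one_smul]
  simp only [smul_sub, sum_sub_distrib, ← sum_smul, hsum, sub_self]

theorem Finset.sum_mul_norm_sub_sq_eq_centerMass (hw : ∑ i ∈ s, w i ≠ 0) (z : E) :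
    ∑ i ∈ s, w i * ‖x i - z‖ ^ 2 =
      ∑ i ∈ s, w i * ‖x i - s.centerMass w x‖ ^ 2 +
        (∑ i ∈ s, w i) * ‖s.centerMass w x - z‖ ^ 2 := by
  set c := s.centerMass w x
  have hsplit : ∀ i, w i * ‖x i - z‖ ^ 2 =
      w i * ‖x i - c‖ ^ 2 + 2 * inner ℝ (w i • (x i - c)) (c - z) + w i * ‖c - z‖ ^ 2 := by
    intro i
    rw [← sub_add_sub_cancel (x i) c z, norm_add_sq_real, real_inner_smul_left]
    ring
  rw [sum_congr rfl fun i _ => hsplit i, sum_add_distrib, sum_add_distrib, ← mul_sum,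
    ← sum_inner, Finset.sum_smul_sub_centerMass x hw, inner_zero_left, mul_zero, add_zero,
    ← sum_mul]

theorem Finset.sum_mul_norm_sub_centerMass_sq_le (hw : 0 < ∑ i ∈ s, w i) (z : E) :
    ∑ i ∈ s, w i * ‖x i - s.centerMass w x‖ ^ 2 ≤ ∑ i ∈ s, w i * ‖x i - z‖ ^ 2 := by
  rw [Finset.sum_mul_norm_sub_sq_eq_centerMass x hw.ne' z]
  have := mul_nonneg hw.le (sq_nonneg ‖s.centerMass w x - z‖)
  linarith

end Centroid

section Lloyd

variable {ι κ E : Type*} [Fintype ι] [DecidableEq κ]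
  [NormedAddCommGroup E] [InnerProductSpace ℝ E]

theorem sum_mul_norm_sub_update_centerMass_sq_le (p : ι → ℝ) (ξ : ι → E) (y : κ → E)
    (a : ι → κ) (k : κ) (hS : 0 < ∑ i ∈ univ.filter (a · = k), p i) :
    ∑ i, p i * ‖ξ i - Function.update y k ((univ.filter (a · = k)).centerMass p ξ) (a i)‖ ^ 2 ≤
      ∑ i, p i * ‖ξ i - y (a i)‖ ^ 2 := by
  rw [← sum_filter_add_sum_filter_not univ (a · = k),
    ← sum_filter_add_sum_filter_not univ (a · = k) (fun i => p i * ‖ξ i - y (a i)‖ ^ 2)]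
  refine add_le_add ?_ (sum_congr rfl fun i hi => ?_).le
  · calc _ = ∑ i ∈ univ.filter (a · = k),
          p i * ‖ξ i - (univ.filter (a · = k)).centerMass p ξ‖ ^ 2 :=
          sum_congr rfl fun i hi => by rw [(mem_filter.mp hi).2, Function.update_self]
      _ ≤ ∑ i ∈ univ.filter (a · = k), p i * ‖ξ i - y k‖ ^ 2 :=
          Finset.sum_mul_norm_sub_centerMass_sq_le ξ hS (y k)
      _ = _ := sum_congr rfl fun i hi => by rw [(mem_filter.mp hi).2]
  · rw [Function.update_of_ne (mem_filter.mp hi).2]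

end Lloyd

theorem stmt_16 {n I K : ℕ} (hK : 0 < K)
    (ξ : Fin I → EuclideanSpace ℝ (Fin n))
    (y : Fin K → EuclideanSpace ℝ (Fin n))
    (p : Fin I → ℝ) (hp : ∀ i, 0 < p i)
    (kmin : Fin I → Fin K)
    -- fixed tie-breaking assignment to the nearest center
    (hkmin : ∀ i j, ‖ξ i - y (kmin i)‖ ≤ ‖ξ i - y j‖)
    (k : Fin K)
    (S : Finset (Fin I)) (hS : S = univ.filter fun i => kmin i = k)
    (hSne : S.Nonempty)
    (c : EuclideanSpace ℝ (Fin n))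
    (hc : c = (∑ i ∈ S, p i)⁻¹ • ∑ i ∈ S, p i • ξ i) :
    ∑ i, p i * (univ.inf' (univ_nonempty_iff.mpr ⟨⟨0, hK⟩⟩)
        fun j => ‖ξ i - Function.update y k c j‖ ^ 2) ≤
    ∑ i, p i * (univ.inf' (univ_nonempty_iff.mpr ⟨⟨0, hK⟩⟩)
        fun j => ‖ξ i - y j‖ ^ 2) := by
  have hc : c = S.centerMass p ξ := hc
  subst hc hS
  have hnearest : ∀ i, univ.inf' (univ_nonempty_iff.mpr ⟨⟨0, hK⟩⟩)
      (fun j => ‖ξ i - y j‖ ^ 2) = ‖ξ i - y (kmin i)‖ ^ 2 := fun i =>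
    le_antisymm (inf'_le _ (mem_univ _))
      (le_inf' _ _ fun j _ => pow_le_pow_left₀ (norm_nonneg _) (hkmin i j) 2)
  calc _ ≤ ∑ i, p i * ‖ξ i - Function.update y k
          ((univ.filter (kmin · = k)).centerMass p ξ) (kmin i)‖ ^ 2 :=
        sum_le_sum fun i _ => mul_le_mul_of_nonneg_left (inf'_le _ (mem_univ (kmin i))) (hp i).le
    _ ≤ ∑ i, p i * ‖ξ i - y (kmin i)‖ ^ 2 :=
        sum_mul_norm_sub_update_centerMass_sq_le p ξ y kmin k
          (sum_pos (fun i _ => hp i) hSne)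
    _ = _ := by simp only [hnearest]
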